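/- arXiv:2005.14128 — 5 statements merged into one kernel-verified Lean document; each statement's English description precedes it below -/
import Mathlib

section
/- Let Φ : (0,1) × ℝ → ℝ² be defined by Φ(w,z) = (cot(πw) − z, z). Then for every (w,z) ∈ (0,1) × ℝ, Φ is Fréchet differentiable at (w,z) with Jacobian matrix J(w,z) = [[−π/sin²(πw), −1], [0, 1]], and the pullback identity J(w,z)ᵀ · H(Φ(w,z)) · J(w,z) = h(w,z) holds, where H(x,y) = [[(1+(x+y)²)^{−2}, 0], [0, 1]] and h(w,z) = [[π², π·sin²(πw)], [π·sin²(πw), 1 + sin⁴(πw)]]. -/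
open scoped Matrix

/-- The change of variables `Φ(w,z) = (cot(πw) - z, z)` on `(0,1) × ℝ`. -/
noncomputable def Phi : (Fin 2 → ℝ) → (Fin 2 → ℝ) :=
  fun p => ![Real.cot (Real.pi * p 0) - p 1, p 1]

/-- The Jacobian matrix `J(w,z) = [[-π/sin²(πw), -1], [0, 1]]` (independent of `z`). -/
noncomputable def Jmat (w : ℝ) : Matrix (Fin 2) (Fin 2) ℝ :=
  !![-Real.pi / (Real.sin (Real.pi * w)) ^ 2, -1; 0, 1]

/-- The metric `H(x,y) = [[(1+(x+y)²)⁻², 0], [0, 1]]` in the `(x,y)` coordinates. -/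
noncomputable def Hmat (x y : ℝ) : Matrix (Fin 2) (Fin 2) ℝ :=
  !![((1 + (x + y) ^ 2) ^ 2)⁻¹, 0; 0, 1]

/-- The metric `h(w,z) = [[π², π sin²(πw)], [π sin²(πw), 1 + sin⁴(πw)]]` on `(0,1) × ℝ`. -/
noncomputable def hmat (w : ℝ) : Matrix (Fin 2) (Fin 2) ℝ :=
  !![Real.pi ^ 2, Real.pi * (Real.sin (Real.pi * w)) ^ 2;
     Real.pi * (Real.sin (Real.pi * w)) ^ 2, 1 + (Real.sin (Real.pi * w)) ^ 4]

lemma my_hasDerivAt_cot {x : ℝ} (h : Real.sin x ≠ 0) :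
    HasDerivAt Real.cot (-(1 / Real.sin x ^ 2)) x := by
  have hd := (Real.hasDerivAt_cos x).div (Real.hasDerivAt_sin x) h
  have heq : (Real.cos / Real.sin : ℝ → ℝ) = Real.cot := by
    funext y; rw [Pi.div_apply, Real.cot_eq_cos_div_sin]
  rw [heq] at hd
  refine hd.congr_deriv ?_
  have := Real.sin_sq_add_cos_sq x
  field_simp
  nlinarith [Real.sin_sq_add_cos_sq x]

/-- `Φ` is Fréchet differentiable on `(0,1) × ℝ` with Jacobian `J(w,z)`, and
`J(w,z)ᵀ · H(Φ(w,z)) · J(w,z) = h(w,z)`, i.e. `Φ` pulls the metric `H` back to `h`. -/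
theorem stmt_0 (w z : ℝ) (hw : w ∈ Set.Ioo (0 : ℝ) 1) :
    HasFDerivAt Phi
      (LinearMap.toContinuousLinearMap (Matrix.mulVecLin (Jmat w))) ![w, z] ∧
    (Jmat w)ᵀ * Hmat (Real.cot (Real.pi * w) - z) z * Jmat w = hmat w := by
  have hs : Real.sin (Real.pi * w) ≠ 0 := by
    refine ne_of_gt (Real.sin_pos_of_pos_of_lt_pi ?_ ?_)
    · nlinarith [Real.pi_pos, hw.1]
    · nlinarith [Real.pi_pos, hw.2]
  have h2 : 1 + Real.cot (Real.pi * w) ^ 2 = (Real.sin (Real.pi * w) ^ 2)⁻¹ := by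
    rw [Real.cot_eq_cos_div_sin, div_pow]
    field_simp
    exact Real.sin_sq_add_cos_sq _
  constructor
  · apply hasFDerivAt_pi'.2
    intro i
    fin_cases i
    · show HasFDerivAt (fun x : Fin 2 → ℝ => Real.cot (Real.pi * x 0) - x 1) _ _
      have h0 : HasFDerivAt (fun x : Fin 2 → ℝ => Real.pi * x 0)
          (Real.pi • (ContinuousLinearMap.proj 0 : (Fin 2 → ℝ) →L[ℝ] ℝ)) ![w, z] :=
        ((ContinuousLinearMap.proj 0 : (Fin 2 → ℝ) →L[ℝ] ℝ).hasFDerivAt).const_smul Real.pi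
      have hc : HasDerivAt Real.cot (-(1 / Real.sin (Real.pi * w) ^ 2))
          ((fun x : Fin 2 → ℝ => Real.pi * x 0) ![w, z]) := by
        simpa using my_hasDerivAt_cot hs
      have hcomp := (hc.comp_hasFDerivAt ![w, z] h0).sub
        ((ContinuousLinearMap.proj 1 : (Fin 2 → ℝ) →L[ℝ] ℝ).hasFDerivAt)
      have hCLM : (-(1 / Real.sin (Real.pi * w) ^ 2)) •
            (Real.pi • (ContinuousLinearMap.proj 0 : (Fin 2 → ℝ) →L[ℝ] ℝ)) -
            (ContinuousLinearMap.proj 1 : (Fin 2 → ℝ) →L[ℝ] ℝ)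
          = (ContinuousLinearMap.proj 0).comp
              (LinearMap.toContinuousLinearMap (Matrix.mulVecLin (Jmat w))) := by
        ext v
        simp [Jmat, Matrix.mulVec, dotProduct, Fin.sum_univ_two, Matrix.vecHead, Matrix.vecTail]
        ring
      exact hcomp.congr_fderiv hCLM
    · show HasFDerivAt (fun x : Fin 2 → ℝ => x 1) _ _
      have hCLM : (ContinuousLinearMap.proj 1 : (Fin 2 → ℝ) →L[ℝ] ℝ)
          = (ContinuousLinearMap.proj 1).comp
              (LinearMap.toContinuousLinearMap (Matrix.mulVecLin (Jmat w))) := by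
        ext v
        simp [Jmat, Matrix.mulVec, dotProduct, Fin.sum_univ_two, Matrix.vecHead, Matrix.vecTail]
      exact (ContinuousLinearMap.proj 1 : (Fin 2 → ℝ) →L[ℝ] ℝ).hasFDerivAt.congr_fderiv hCLM
  · have hH : Hmat (Real.cot (Real.pi * w) - z) z
        = !![Real.sin (Real.pi * w) ^ 4, 0; 0, 1] := by
      have : Real.cot (Real.pi * w) - z + z = Real.cot (Real.pi * w) := by ring
      rw [Hmat, this, h2]
      congr 1
      rw [← inv_pow, inv_inv, ← pow_mul]
    have hJT : (Jmat w)ᵀ = !![-Real.pi / (Real.sin (Real.pi * w)) ^ 2, 0; -1, 1] := by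
      ext i j
      fin_cases i <;> fin_cases j <;> simp [Jmat]
    rw [hH, hJT]
    ext i j
    fin_cases i <;> fin_cases j
    all_goals simp [Jmat, hmat, Matrix.mul_apply, Matrix.transpose_apply, Fin.sum_univ_two]
    all_goals try field_simp
    all_goals try ring
end

section
/- Define f̃ : ℝ² → ℝ by f̃(x,y) = exp(−2π(x+y))·(sin(2π(x − 1/8)) + √2) + 1. Then for every y ∈ ℝ: (i) ∂f̃/∂x (0, y) = 0, and (ii) ∂f̃/∂y (0, y) = −√2·π·exp(−2πy) < 0. -/
/-- The warping function `f̃(x,y) = exp(-2π(x+y))(sin(2π(x - 1/8)) + √2) + 1`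
in the `(x,y)` coordinates. -/
noncomputable def ftilde (x y : ℝ) : ℝ :=
  Real.exp (-2 * Real.pi * (x + y)) *
    (Real.sin (2 * Real.pi * (x - 1 / 8)) + Real.sqrt 2) + 1

/-- Along the line `{x = 0}`: (i) `∂f̃/∂x(0,y) = 0`, and
(ii) `∂f̃/∂y(0,y) = -√2 π exp(-2πy) < 0`. -/
theorem stmt_5 (y : ℝ) :
    HasDerivAt (fun x => ftilde x y) 0 0 ∧
    HasDerivAt (fun t => ftilde 0 t)
      (-(Real.sqrt 2) * Real.pi * Real.exp (-2 * Real.pi * y)) y ∧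
    -(Real.sqrt 2) * Real.pi * Real.exp (-2 * Real.pi * y) < 0 := by
  have hpi := Real.pi_pos
  have hs2 : Real.sqrt 2 > 0 := Real.sqrt_pos.mpr (by norm_num)
  have harg : 2 * Real.pi * ((0:ℝ) - 1 / 8) = -(Real.pi / 4) := by ring
  have hsin : Real.sin (2 * Real.pi * ((0:ℝ) - 1 / 8)) = -(Real.sqrt 2 / 2) := by
    rw [harg, Real.sin_neg, Real.sin_pi_div_four]
  have hcos : Real.cos (2 * Real.pi * ((0:ℝ) - 1 / 8)) = Real.sqrt 2 / 2 := by
    rw [harg, Real.cos_neg, Real.cos_pi_div_four]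
  refine ⟨?_, ?_, ?_⟩
  · have h1 : HasDerivAt (fun x : ℝ => -2 * Real.pi * (x + y))
        (-2 * Real.pi) 0 := by
      simpa using ((hasDerivAt_id (0:ℝ)).add_const y).const_mul (-2 * Real.pi)
    have hE := h1.exp
    have h2 : HasDerivAt (fun x : ℝ => 2 * Real.pi * (x - 1 / 8))
        (2 * Real.pi) 0 := by
      simpa only [id_eq, mul_one] using ((hasDerivAt_id (0:ℝ)).sub_const (1/8)).const_mul (2 * Real.pi)
    have hS := (h2.sin).add_const (Real.sqrt 2)
    have := (hE.mul hS).add_const 1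
    refine HasDerivAt.congr_deriv this ?_
    rw [hsin, hcos]
    ring
  · have h1 : HasDerivAt (fun t : ℝ => -2 * Real.pi * ((0:ℝ) + t))
        (-2 * Real.pi) y := by
      simpa using ((hasDerivAt_id y).const_add (0:ℝ)).const_mul (-2 * Real.pi)
    have hE := h1.exp
    have := (hE.mul_const (Real.sin (2 * Real.pi * ((0:ℝ) - 1 / 8)) + Real.sqrt 2)).add_const 1
    refine HasDerivAt.congr_deriv this ?_
    rw [hsin]
    have : -2 * Real.pi * ((0:ℝ) + y) = -2 * Real.pi * y := by ring
    rw [this]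
    ring
  · have := Real.exp_pos (-2 * Real.pi * y)
    nlinarith [mul_pos (mul_pos hs2 hpi) this]
end

section
/- Let E be a real normed vector space, r₀ > 0, C₁ ≥ 0, E₀ ≥ 0, and let u : [r₀, ∞) × ℝ → E, (r, θ) ↦ u(r, θ), be continuous and differentiable in the variable r. Assume: (i) there is a family (Φ_s)_{s ∈ ℝ} of isometries of E with Φ_0 = id, ‖Φ_s(p) − p‖ ≤ C₁|s| for all p ∈ E and s ∈ ℝ, and u(r, θ + s) = Φ_s(u(r, θ)) for all r ≥ r₀ and θ, s ∈ ℝ; (ii) for every θ ∈ ℝ, ∫_{r₀}^∞ ‖∂_r u(r, θ)‖² r dr ≤ E₀. Then for all r, s ≥ r₀ and θ₁, θ₂ ∈ ℝ: ‖u(r, θ₁) − u(s, θ₂)‖ ≤ √(E₀/r₀) · |r − s|^{1/2} + C₁ · |θ₁ − θ₂|. -/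
open scoped ENNReal

open MeasureTheory Set

lemma radial_bound {F : Type*} [NormedAddCommGroup F] [NormedSpace ℝ F] [CompleteSpace F]
    (r₀ : ℝ) (hr₀ : 0 < r₀) (E₀ : ℝ) (hE₀ : 0 ≤ E₀) (f f' : ℝ → F)
    (hd : ∀ ρ ∈ Set.Ici r₀, HasDerivAt f (f' ρ) ρ)
    (hen : (∫⁻ ρ in Set.Ioi r₀, ENNReal.ofReal (‖f' ρ‖ ^ 2 * ρ)) ≤ ENNReal.ofReal E₀)
    {s r : ℝ} (hs : r₀ ≤ s) (hsr : s ≤ r) :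
    ‖f r - f s‖ ≤ Real.sqrt (E₀ / r₀) * Real.sqrt (r - s) := by
  borelize F
  have hsub : Set.Ioc s r ⊆ Set.Ici r₀ := fun x hx => hs.trans hx.1.le
  have hsub' : Set.Ioc s r ⊆ Set.Ioi r₀ := fun x hx => lt_of_le_of_lt hs hx.1
  -- f' agrees with deriv f a.e. on Ioc s r
  have hae : f' =ᵐ[volume.restrict (Set.Ioc s r)] deriv f := by
    refine (ae_restrict_iff' measurableSet_Ioc).2 (Filter.Eventually.of_forall fun x hx => ?_)
    exact ((hd x (hsub hx)).deriv).symm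
  have hmeas : AEStronglyMeasurable f' (volume.restrict (Set.Ioc s r)) :=
    (stronglyMeasurable_deriv f).aestronglyMeasurable.congr hae.symm
  -- energy over Ioc s r
  have hen' : (∫⁻ ρ in Set.Ioc s r, ENNReal.ofReal (‖f' ρ‖ ^ 2 * ρ)) ≤ ENNReal.ofReal E₀ :=
    le_trans (lintegral_mono_set hsub') hen
  -- pointwise bound for integrability
  have hpt : ∀ x ∈ Set.Ioc s r,
      ENNReal.ofReal ‖f' x‖ ≤ 1 + ENNReal.ofReal (‖f' x‖ ^ 2 * x) / ENNReal.ofReal r₀ := by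
    intro x hx
    have hxr₀ : r₀ ≤ x := hsub hx
    have hreal : ‖f' x‖ ≤ 1 + ‖f' x‖ ^ 2 * x / r₀ := by
      rcases le_or_gt ‖f' x‖ 1 with h | h
      · have hx0 : (0:ℝ) < x := hr₀.trans_le hxr₀
        have : 0 ≤ ‖f' x‖ ^ 2 * x / r₀ := by positivity
        linarith
      · have h1 : ‖f' x‖ ≤ ‖f' x‖ ^ 2 := by nlinarith
        have h2 : ‖f' x‖ ^ 2 ≤ ‖f' x‖ ^ 2 * x / r₀ := by
          rw [le_div_iff₀ hr₀]
          nlinarith [sq_nonneg (‖f' x‖)]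
        linarith
    calc ENNReal.ofReal ‖f' x‖ ≤ ENNReal.ofReal (1 + ‖f' x‖ ^ 2 * x / r₀) :=
          ENNReal.ofReal_le_ofReal hreal
      _ = 1 + ENNReal.ofReal (‖f' x‖ ^ 2 * x / r₀) := by
          rw [ENNReal.ofReal_add (by norm_num) (by
            have hx0 : (0:ℝ) < x := hr₀.trans_le hxr₀
            positivity), ENNReal.ofReal_one]
      _ = 1 + ENNReal.ofReal (‖f' x‖ ^ 2 * x) / ENNReal.ofReal r₀ := by
          rw [ENNReal.ofReal_div_of_pos hr₀]
  -- integrability of f' on Ioc s r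
  have hint : IntegrableOn f' (Set.Ioc s r) := by
    refine ⟨hmeas, ?_⟩
    rw [HasFiniteIntegral]
    calc (∫⁻ x in Set.Ioc s r, ‖f' x‖₊)
        = ∫⁻ x in Set.Ioc s r, ENNReal.ofReal ‖f' x‖ := by
          simp_rw [ofReal_norm, enorm_eq_nnnorm]
      _ ≤ ∫⁻ x in Set.Ioc s r, (1 + ENNReal.ofReal (‖f' x‖ ^ 2 * x) / ENNReal.ofReal r₀) := by
          refine lintegral_mono_ae ((ae_restrict_iff' measurableSet_Ioc).2
            (Filter.Eventually.of_forall hpt))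
      _ = volume (Set.Ioc s r) +
            ∫⁻ x in Set.Ioc s r, ENNReal.ofReal (‖f' x‖ ^ 2 * x) / ENNReal.ofReal r₀ := by
          rw [lintegral_add_left measurable_const]
          congr 1
          simp
      _ = volume (Set.Ioc s r) +
            (∫⁻ x in Set.Ioc s r, ENNReal.ofReal (‖f' x‖ ^ 2 * x)) / ENNReal.ofReal r₀ := by
          simp_rw [div_eq_mul_inv]
          rw [lintegral_mul_const' _ _ (by simp [hr₀])]
      _ ≤ ENNReal.ofReal (r - s) + ENNReal.ofReal E₀ / ENNReal.ofReal r₀ := by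
          rw [Real.volume_Ioc]
          exact add_le_add le_rfl (ENNReal.div_le_div_right hen' _)
      _ < ⊤ := by
          refine ENNReal.add_lt_top.2 ⟨ENNReal.ofReal_lt_top, ?_⟩
          exact ENNReal.div_lt_top ENNReal.ofReal_ne_top (by simp [hr₀])
  have hii : IntervalIntegrable f' volume s r :=
    (intervalIntegrable_iff_integrableOn_Ioc_of_le hsr).2 hint
  -- FTC
  have hftc : (∫ ρ in s..r, f' ρ) = f r - f s := by
    refine intervalIntegral.integral_eq_sub_of_hasDerivAt (fun x hx => ?_) hii
    rw [Set.uIcc_of_le hsr] at hx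
    exact hd x (hs.trans hx.1)
  -- norm bound by integral of norm
  have h1 : ‖f r - f s‖ ≤ ∫ ρ in Set.Ioc s r, ‖f' ρ‖ := by
    rw [← hftc]
    calc ‖∫ ρ in s..r, f' ρ‖ ≤ ∫ ρ in s..r, ‖f' ρ‖ :=
          intervalIntegral.norm_integral_le_integral_norm hsr
      _ = ∫ ρ in Set.Ioc s r, ‖f' ρ‖ := intervalIntegral.integral_of_le hsr
  -- Cauchy–Schwarz via lintegrals
  set φ : ℝ → ENNReal := fun ρ => ENNReal.ofReal (‖f' ρ‖ * Real.sqrt ρ) with hφdef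
  set ψ : ℝ → ENNReal := fun ρ => ENNReal.ofReal (1 / Real.sqrt ρ) with hψdef
  have hφmeas : AEMeasurable φ (volume.restrict (Set.Ioc s r)) := by
    have hm : Measurable fun ρ => ENNReal.ofReal (‖deriv f ρ‖ * Real.sqrt ρ) :=
      (((stronglyMeasurable_deriv f).measurable.norm).mul
        Real.continuous_sqrt.measurable).ennreal_ofReal
    refine hm.aemeasurable.congr ?_
    filter_upwards [hae] with x hx
    rw [hφdef]
    simp only [hx]
  have hψmeas : Measurable ψ := by
    have hm : Measurable fun ρ : ℝ => 1 / Real.sqrt ρ :=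
      measurable_const.div Real.continuous_sqrt.measurable
    exact hm.ennreal_ofReal
  have hCS : (∫⁻ ρ in Set.Ioc s r, ENNReal.ofReal ‖f' ρ‖) ≤
      ENNReal.ofReal (Real.sqrt (E₀ / r₀) * Real.sqrt (r - s)) := by
    have heq : (∫⁻ ρ in Set.Ioc s r, ENNReal.ofReal ‖f' ρ‖)
        = ∫⁻ ρ in Set.Ioc s r, (φ * ψ) ρ := by
      refine setLIntegral_congr_fun measurableSet_Ioc (
        fun x hx => ?_)
      have hx0 : (0:ℝ) < x := hr₀.trans_le (hsub hx)
      have hsq : Real.sqrt x ≠ 0 := (Real.sqrt_pos.2 hx0).ne'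
      simp only [Pi.mul_apply, hφdef, hψdef]
      rw [← ENNReal.ofReal_mul (by positivity)]
      congr 1
      field_simp
    have hpq : Real.HolderConjugate 2 2 := Real.HolderConjugate.two_two
    have hCS0 := ENNReal.lintegral_mul_le_Lp_mul_Lq (volume.restrict (Set.Ioc s r)) hpq
      hφmeas hψmeas.aemeasurable
    have hφ2 : (∫⁻ ρ in Set.Ioc s r, φ ρ ^ (2:ℝ)) ≤ ENNReal.ofReal E₀ := by
      have heq2 : (∫⁻ ρ in Set.Ioc s r, φ ρ ^ (2:ℝ))
          = ∫⁻ ρ in Set.Ioc s r, ENNReal.ofReal (‖f' ρ‖ ^ 2 * ρ) := by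
        refine setLIntegral_congr_fun measurableSet_Ioc (
          fun x hx => ?_)
        have hx0 : (0:ℝ) < x := hr₀.trans_le (hsub hx)
        rw [hφdef, ENNReal.ofReal_rpow_of_nonneg (by positivity) (by norm_num)]
        congr 1
        rw [Real.rpow_two, mul_pow, Real.sq_sqrt hx0.le]
      rw [heq2]; exact hen'
    have hψ2 : (∫⁻ ρ in Set.Ioc s r, ψ ρ ^ (2:ℝ)) ≤ ENNReal.ofReal ((r - s) / r₀) := by
      calc (∫⁻ ρ in Set.Ioc s r, ψ ρ ^ (2:ℝ))
          ≤ ∫⁻ _ in Set.Ioc s r, ENNReal.ofReal (1 / r₀) := by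
            refine lintegral_mono_ae ((ae_restrict_iff' measurableSet_Ioc).2
              (Filter.Eventually.of_forall fun x hx => ?_))
            have hx0 : (0:ℝ) < x := hr₀.trans_le (hsub hx)
            rw [hψdef, ENNReal.ofReal_rpow_of_nonneg (by positivity) (by norm_num)]
            refine ENNReal.ofReal_le_ofReal ?_
            rw [Real.rpow_two, div_pow, one_pow, Real.sq_sqrt hx0.le]
            exact one_div_le_one_div_of_le hr₀ (hsub hx)
        _ = ENNReal.ofReal ((r - s) / r₀) := by
            rw [setLIntegral_const, Real.volume_Ioc, ← ENNReal.ofReal_mul (by positivity)]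
            congr 1
            field_simp
    calc (∫⁻ ρ in Set.Ioc s r, ENNReal.ofReal ‖f' ρ‖)
        = ∫⁻ ρ in Set.Ioc s r, (φ * ψ) ρ := heq
      _ ≤ (∫⁻ ρ in Set.Ioc s r, φ ρ ^ (2:ℝ)) ^ (1/(2:ℝ)) *
            (∫⁻ ρ in Set.Ioc s r, ψ ρ ^ (2:ℝ)) ^ (1/(2:ℝ)) := hCS0
      _ ≤ (ENNReal.ofReal E₀) ^ (1/(2:ℝ)) * (ENNReal.ofReal ((r - s) / r₀)) ^ (1/(2:ℝ)) :=
          mul_le_mul' (ENNReal.rpow_le_rpow hφ2 (by norm_num))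
            (ENNReal.rpow_le_rpow hψ2 (by norm_num))
      _ = ENNReal.ofReal (Real.sqrt (E₀ / r₀) * Real.sqrt (r - s)) := by
          rw [ENNReal.ofReal_rpow_of_nonneg hE₀ (by norm_num),
            ENNReal.ofReal_rpow_of_nonneg (div_nonneg (sub_nonneg.2 hsr) hr₀.le) (by norm_num),
            ← ENNReal.ofReal_mul (Real.rpow_nonneg hE₀ _)]
          congr 1
          rw [← Real.sqrt_eq_rpow, ← Real.sqrt_eq_rpow, ← Real.sqrt_mul hE₀,
            ← Real.sqrt_mul (div_nonneg hE₀ hr₀.le)]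
          congr 1
          ring
  have h2 : (∫ ρ in Set.Ioc s r, ‖f' ρ‖) ≤ Real.sqrt (E₀ / r₀) * Real.sqrt (r - s) := by
    have hofReal : ENNReal.ofReal (∫ ρ in Set.Ioc s r, ‖f' ρ‖)
        = ∫⁻ ρ in Set.Ioc s r, ENNReal.ofReal ‖f' ρ‖ :=
      ofReal_integral_eq_lintegral_ofReal hint.norm
        (Filter.Eventually.of_forall fun x => norm_nonneg _)
    refine (ENNReal.ofReal_le_ofReal_iff (by positivity)).1 ?_
    rw [hofReal]; exact hCS
  linarith


/-- Hölder continuity of quasi-equivariant finite-energy maps (flat-target version):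
if `u(r, θ+s) = Φ_s(u(r,θ))` for a one-parameter family of isometries `Φ_s` of `E`
with `Φ_0 = id` and `‖Φ_s(p) - p‖ ≤ C₁|s|`, and the radial energy satisfies
`∫_{r₀}^∞ ‖∂_r u(r,θ)‖² r dr ≤ E₀` for every `θ`, then
`‖u(r,θ₁) - u(s,θ₂)‖ ≤ √(E₀/r₀) |r - s|^{1/2} + C₁ |θ₁ - θ₂|` on `[r₀,∞) × ℝ`. -/
theorem stmt_9 {E : Type*} [NormedAddCommGroup E] [NormedSpace ℝ E]
    (r₀ : ℝ) (hr₀ : 0 < r₀) (C₁ E₀ : ℝ) (hC₁ : 0 ≤ C₁) (hE₀ : 0 ≤ E₀)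
    (u u' : ℝ → ℝ → E)
    (hcont : Continuous fun p : ℝ × ℝ => u p.1 p.2)
    (hdiff : ∀ θ : ℝ, ∀ r ∈ Set.Ici r₀, HasDerivAt (fun ρ => u ρ θ) (u' r θ) r)
    (Φ : ℝ → E → E)
    (hΦ0 : ∀ p : E, Φ 0 p = p)
    (hiso : ∀ (s : ℝ) (p q : E), ‖Φ s p - Φ s q‖ = ‖p - q‖)
    (hlip : ∀ (s : ℝ) (p : E), ‖Φ s p - p‖ ≤ C₁ * |s|)
    (hequiv : ∀ r ∈ Set.Ici r₀, ∀ θ s : ℝ, u r (θ + s) = Φ s (u r θ))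
    (henergy : ∀ θ : ℝ,
      (∫⁻ r in Set.Ioi r₀, ENNReal.ofReal (‖u' r θ‖ ^ 2 * r)) ≤ ENNReal.ofReal E₀) :
    ∀ r ∈ Set.Ici r₀, ∀ s ∈ Set.Ici r₀, ∀ θ₁ θ₂ : ℝ,
      ‖u r θ₁ - u s θ₂‖ ≤
        Real.sqrt (E₀ / r₀) * Real.sqrt |r - s| + C₁ * |θ₁ - θ₂| := by
  have hang : ∀ ρ ∈ Set.Ici r₀, ∀ θ θ' : ℝ, ‖u ρ θ - u ρ θ'‖ ≤ C₁ * |θ - θ'| := by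
    intro ρ hρ θ θ'
    have h := hequiv ρ hρ θ' (θ - θ')
    have h' : θ' + (θ - θ') = θ := by ring
    rw [h'] at h
    calc ‖u ρ θ - u ρ θ'‖ = ‖Φ (θ - θ') (u ρ θ') - u ρ θ'‖ := by rw [h]
      _ ≤ C₁ * |θ - θ'| := hlip _ _
  have hrad : ∀ θ : ℝ, ∀ a ∈ Set.Ici r₀, ∀ b ∈ Set.Ici r₀, b ≤ a →
      ‖u a θ - u b θ‖ ≤ Real.sqrt (E₀ / r₀) * Real.sqrt (a - b) := by
    intro θ a ha b hb hba
    set ι : E →L[ℝ] UniformSpace.Completion E := UniformSpace.Completion.toComplL with hι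
    have hnorm : ∀ x : E, ‖ι x‖ = ‖x‖ := fun x => UniformSpace.Completion.norm_coe x
    have key := radial_bound r₀ hr₀ E₀ hE₀ (fun ρ => ι (u ρ θ)) (fun ρ => ι (u' ρ θ))
      (fun ρ hρ => ι.hasFDerivAt.comp_hasDerivAt ρ (hdiff θ ρ hρ))
      (by simpa only [hnorm] using henergy θ) hb hba
    rw [← map_sub, hnorm] at key
    exact key
  intro r hr s hs θ₁ θ₂
  rcases le_total s r with h | h
  · calc ‖u r θ₁ - u s θ₂‖ = ‖(u r θ₁ - u s θ₁) + (u s θ₁ - u s θ₂)‖ := by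
          rw [sub_add_sub_cancel]
      _ ≤ ‖u r θ₁ - u s θ₁‖ + ‖u s θ₁ - u s θ₂‖ := norm_add_le _ _
      _ ≤ Real.sqrt (E₀ / r₀) * Real.sqrt (r - s) + C₁ * |θ₁ - θ₂| :=
          add_le_add (hrad θ₁ r hr s hs h) (hang s hs θ₁ θ₂)
      _ = Real.sqrt (E₀ / r₀) * Real.sqrt |r - s| + C₁ * |θ₁ - θ₂| := by
          rw [abs_of_nonneg (sub_nonneg.2 h)]
  · calc ‖u r θ₁ - u s θ₂‖ = ‖(u r θ₁ - u r θ₂) + (u r θ₂ - u s θ₂)‖ := by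
          rw [sub_add_sub_cancel]
      _ ≤ ‖u r θ₁ - u r θ₂‖ + ‖u r θ₂ - u s θ₂‖ := norm_add_le _ _
      _ ≤ C₁ * |θ₁ - θ₂| + Real.sqrt (E₀ / r₀) * Real.sqrt (s - r) := by
          refine add_le_add (hang r hr θ₁ θ₂) ?_
          rw [norm_sub_rev]
          exact hrad θ₂ s hs r hr h
      _ = Real.sqrt (E₀ / r₀) * Real.sqrt |r - s| + C₁ * |θ₁ - θ₂| := by
          rw [abs_sub_comm r s, abs_of_nonneg (sub_nonneg.2 h)]
          ring
end

section
/- Let R > 0 and let α : (0, R] → ℝ be differentiable with ∫_0^R (1/2)((α'(r))² + sin²(α(r))/r²) r dr < ∞ and lim_{r → 0⁺} α(r) = 0. Then ∫_0^R (1/2)((α'(r))² + sin²(α(r))/r²) r dr ≥ 1 − cos(α(R)). More generally, for any 0 < a ≤ b ≤ R, ∫_a^b (1/2)((α'(r))² + sin²(α(r))/r²) r dr ≥ |cos(α(b)) − cos(α(a))|. -/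
open MeasureTheory Set Filter

private lemma stmt14_ptwise (x s r : ℝ) (hr : 0 < r) :
    |s * x| ≤ 1 / 2 * (x ^ 2 + s ^ 2 / r ^ 2) * r := by
  have e : 1 / 2 * (x ^ 2 + s ^ 2 / r ^ 2) * r = (x ^ 2 * r ^ 2 + s ^ 2) / (2 * r) := by
    field_simp
  rw [e, le_div_iff₀ (by positivity)]
  rcases abs_cases (s * x) with ⟨h, _⟩ | ⟨h, _⟩ <;> rw [h] <;>
    nlinarith [sq_nonneg (x * r - s), sq_nonneg (x * r + s)]

/-- The equivariant energy lower bound: if `α : (0,R] → ℝ` is differentiable with finite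
equivariant energy and `α(r) → 0` as `r → 0⁺`, then the energy is at least
`1 - cos(α(R))`, and more generally the energy over `[a,b]` is at least
`|cos(α(b)) - cos(α(a))|`. -/
theorem stmt_14 (R : ℝ) (hR : 0 < R) (α α' : ℝ → ℝ)
    (hdiff : ∀ r ∈ Set.Ioc (0 : ℝ) R, HasDerivAt α (α' r) r)
    (hfin : MeasureTheory.IntegrableOn
      (fun r => (1 / 2) * ((α' r) ^ 2 + (Real.sin (α r)) ^ 2 / r ^ 2) * r)
      (Set.Ioc (0 : ℝ) R))
    (hlim : Filter.Tendsto α (nhdsWithin 0 (Set.Ioi 0)) (nhds 0)) :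
    (1 - Real.cos (α R) ≤
      ∫ r in Set.Ioc (0 : ℝ) R, (1 / 2) * ((α' r) ^ 2 + (Real.sin (α r)) ^ 2 / r ^ 2) * r) ∧
    ∀ a b : ℝ, 0 < a → a ≤ b → b ≤ R →
      |Real.cos (α b) - Real.cos (α a)| ≤
        ∫ r in a..b, (1 / 2) * ((α' r) ^ 2 + (Real.sin (α r)) ^ 2 / r ^ 2) * r := by
  set f : ℝ → ℝ := fun r => (1 / 2) * ((α' r) ^ 2 + (Real.sin (α r)) ^ 2 / r ^ 2) * r with hfdef
  have hbound : ∀ r : ℝ, 0 < r → |Real.sin (α r) * α' r| ≤ f r := fun r hr =>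
    stmt14_ptwise (α' r) (Real.sin (α r)) r hr
  have key : ∀ a b : ℝ, 0 < a → a ≤ b → b ≤ R →
      |Real.cos (α b) - Real.cos (α a)| ≤ ∫ r in a..b, f r := by
    intro a b ha hab hbR
    have hsub : Set.Ioc a b ⊆ Set.Ioc 0 R := fun r hr =>
      ⟨lt_trans ha hr.1, le_trans hr.2 hbR⟩
    have hderiv : ∀ r ∈ Set.uIcc a b,
        HasDerivAt (fun r => -Real.cos (α r)) (Real.sin (α r) * α' r) r := by
      intro r hr
      rw [Set.uIcc_of_le hab] at hr
      have h : HasDerivAt (fun r => -Real.cos (α r)) (-(-Real.sin (α r) * α' r)) r :=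
        ((hdiff r ⟨lt_of_lt_of_le ha hr.1, le_trans hr.2 hbR⟩).cos).neg
      convert h using 1; ring
    have hfint : IntervalIntegrable f volume a b := by
      rw [intervalIntegrable_iff_integrableOn_Ioc_of_le hab]
      exact hfin.mono_set hsub
    have hmeas : AEStronglyMeasurable (fun r => Real.sin (α r) * α' r)
        (volume.restrict (Set.Ioc a b)) := by
      have hαc : ContinuousOn α (Set.Ioc a b) := fun r hr =>
        ((hdiff r (hsub hr)).continuousAt).continuousWithinAt
      have h1 : AEStronglyMeasurable (fun r => Real.sin (α r) * deriv α r)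
          (volume.restrict (Set.Ioc a b)) :=
        ((Real.continuous_sin.comp_continuousOn hαc).aestronglyMeasurable
          measurableSet_Ioc).mul (measurable_deriv α).aestronglyMeasurable.restrict
      refine h1.congr ?_
      filter_upwards [ae_restrict_mem measurableSet_Ioc] with r hr
      rw [(hdiff r (hsub hr)).deriv]
    have hgint : IntervalIntegrable (fun r => Real.sin (α r) * α' r) volume a b := by
      rw [intervalIntegrable_iff_integrableOn_Ioc_of_le hab]
      refine Integrable.mono (hfin.mono_set hsub) hmeas ?_
      filter_upwards [ae_restrict_mem measurableSet_Ioc] with r hr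
      calc ‖Real.sin (α r) * α' r‖ = |Real.sin (α r) * α' r| := rfl
        _ ≤ f r := hbound r (lt_trans ha hr.1)
        _ ≤ ‖f r‖ := le_abs_self _
    have hftc := intervalIntegral.integral_eq_sub_of_hasDerivAt hderiv hgint
    have h1 : |Real.cos (α b) - Real.cos (α a)| =
        |∫ r in a..b, Real.sin (α r) * α' r| := by
      rw [hftc, show -Real.cos (α b) - -Real.cos (α a)
          = -(Real.cos (α b) - Real.cos (α a)) by ring, abs_neg]
    rw [h1]
    calc |∫ r in a..b, Real.sin (α r) * α' r|
        ≤ ∫ r in a..b, |Real.sin (α r) * α' r| :=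
          intervalIntegral.abs_integral_le_integral_abs hab
      _ ≤ ∫ r in a..b, f r := by
          refine intervalIntegral.integral_mono_on hab hgint.abs hfint ?_
          intro r hr
          exact hbound r (lt_of_lt_of_le ha hr.1)
  refine ⟨?_, key⟩
  have htend : Tendsto (fun a => Real.cos (α a) - Real.cos (α R))
      (nhdsWithin 0 (Set.Ioi 0)) (nhds (1 - Real.cos (α R))) := by
    have h1 : Tendsto (fun a => Real.cos (α a)) (nhdsWithin 0 (Set.Ioi 0)) (nhds 1) := by
      have := (Real.continuous_cos.tendsto 0).comp hlim
      simpa [Function.comp_def] using this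
    simpa using h1.sub_const (Real.cos (α R))
  refine le_of_tendsto htend ?_
  filter_upwards [Ioc_mem_nhdsGT_of_mem (Set.left_mem_Ico.2 hR)] with a ha
  calc Real.cos (α a) - Real.cos (α R)
      ≤ |Real.cos (α R) - Real.cos (α a)| := by
        rw [abs_sub_comm]; exact le_abs_self _
    _ ≤ ∫ r in a..R, f r := key a R ha.1 ha.2 le_rfl
    _ ≤ ∫ r in Set.Ioc (0 : ℝ) R, f r := by
        rw [intervalIntegral.integral_of_le ha.2]
        refine setIntegral_mono_set hfin ?_ ?_
        · filter_upwards [ae_restrict_mem measurableSet_Ioc] with r hr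
          have hr0 : (0 : ℝ) < r := hr.1
          have := Real.sin_le_one (α r)
          positivity
        · exact HasSubset.Subset.eventuallyLE (Set.Ioc_subset_Ioc_left ha.1.le)
end

section
/- Let (M, d) be a metric space, T ∈ (0, ∞], and let u : [0, T) × ℝ² → M be continuous. Let (t_n) be a sequence in [0, T) with t_n → T, let (r_n) be a sequence of positive reals, and let ω : ℝ² \ {0} → M be a continuous map. Assume that for every compact set K ⊂ ℝ² \ {0}, sup_{x ∈ K} d(u(t_n, r_n x), ω(x)) → 0 as n → ∞. Then the set (⋃_{t ∈ [0,T)} u({t} × ℝ²)) ∪ ω(ℝ² \ {0}) is a connected subset of M. -/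
open Filter Topology
open scoped ENNReal

/-- Connectedness of the flow together with the bubble: if `u : [0,T) × ℝ² → M` is
continuous (`T ∈ (0,∞]`), `t_n → T` in `[0,T)`, `r_n > 0`, and the rescaled maps
`x ↦ u(t_n, r_n x)` converge to `ω` uniformly on every compact subset of `ℝ² \ {0}`,
then the union of all the images `u({t} × ℝ²)` for `t ∈ [0,T)` together with
`ω(ℝ² \ {0})` is a connected subset of `M`. -/
theorem stmt_15 {M : Type*} [MetricSpace M]
    (T : ℝ≥0∞) (hT : 0 < T)
    (u : ℝ → EuclideanSpace ℝ (Fin 2) → M)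
    (hu : ContinuousOn (fun p : ℝ × EuclideanSpace ℝ (Fin 2) => u p.1 p.2)
      ({t : ℝ | 0 ≤ t ∧ ENNReal.ofReal t < T} ×ˢ Set.univ))
    (tn : ℕ → ℝ) (htn : ∀ n, 0 ≤ tn n ∧ ENNReal.ofReal (tn n) < T)
    (htnT : Tendsto (fun n => ENNReal.ofReal (tn n)) atTop (𝓝 T))
    (rn : ℕ → ℝ) (hrn : ∀ n, 0 < rn n)
    (ω : EuclideanSpace ℝ (Fin 2) → M)
    (hω : ContinuousOn ω {(0 : EuclideanSpace ℝ (Fin 2))}ᶜ)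
    (hconv : ∀ K : Set (EuclideanSpace ℝ (Fin 2)), IsCompact K →
      K ⊆ {(0 : EuclideanSpace ℝ (Fin 2))}ᶜ →
      TendstoUniformlyOn (fun n x => u (tn n) (rn n • x)) ω atTop K) :
    IsConnected
      ((⋃ t ∈ {t : ℝ | 0 ≤ t ∧ ENNReal.ofReal t < T}, Set.range (u t)) ∪
        ω '' {(0 : EuclideanSpace ℝ (Fin 2))}ᶜ) := by
  set S : Set ℝ := {t : ℝ | 0 ≤ t ∧ ENNReal.ofReal t < T} with hS
  set U := ⋃ t ∈ S, Set.range (u t) with hUdef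
  have hUeq : U = (fun p : ℝ × EuclideanSpace ℝ (Fin 2) => u p.1 p.2) '' (S ×ˢ Set.univ) := by
    ext y
    simp only [hUdef, Set.mem_iUnion, Set.mem_range, Set.mem_image, Set.mem_prod,
      Set.mem_univ, and_true, Prod.exists]
    constructor
    · rintro ⟨t, ht, x, rfl⟩; exact ⟨t, x, ht, rfl⟩
    · rintro ⟨t, x, ht, rfl⟩; exact ⟨t, ht, x, rfl⟩
  have hSpre : IsPreconnected S := by
    apply Set.OrdConnected.isPreconnected
    constructor
    intro a ha b hb c hc
    exact ⟨le_trans ha.1 hc.1, lt_of_le_of_lt (ENNReal.ofReal_le_ofReal hc.2) hb.2⟩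
  have h0S : (0:ℝ) ∈ S := ⟨le_refl _, by simpa using hT⟩
  have hUconn : IsConnected U := by
    rw [hUeq]
    have hP : IsConnected (S ×ˢ (Set.univ : Set (EuclideanSpace ℝ (Fin 2)))) :=
      ⟨⟨((0:ℝ), (0 : EuclideanSpace ℝ (Fin 2))), h0S, Set.mem_univ _⟩,
        hSpre.prod isPreconnected_univ⟩
    exact hP.image _ hu
  have hsub : ω '' {(0 : EuclideanSpace ℝ (Fin 2))}ᶜ ⊆ closure U := by
    rintro _ ⟨x, hx, rfl⟩
    have hK := hconv {x} isCompact_singleton (Set.singleton_subset_iff.mpr hx)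
    have htend : Tendsto (fun n => u (tn n) (rn n • x)) atTop (𝓝 (ω x)) :=
      hK.tendsto_at (Set.mem_singleton x)
    refine mem_closure_of_tendsto htend (Eventually.of_forall fun n => ?_)
    exact Set.mem_biUnion (htn n) ⟨rn n • x, rfl⟩
  refine ⟨hUconn.nonempty.mono Set.subset_union_left, ?_⟩
  exact hUconn.isPreconnected.subset_closure Set.subset_union_left
    (Set.union_subset subset_closure hsub)
end
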